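/- Let A and B be n×n matrices with entries in {0,1}, supported on a single superdiagonal: a_i^j = b_i^j = 0 whenever j - i ≠ r, for some fixed r ∈ {1,…,n-1}. Suppose there exists an invertible matrix C with ‖C‖, ‖C^{-1}‖ ≤ ξ and ‖AC - CB‖ = ε < 1/(n! ξ^n). Then rank A = rank B. -/

import Mathlib

open Matrix

/-- The (Euclidean) operator norm of a complex matrix. -/
noncomputable def opNorm {ι κ : Type*} [Fintype ι] [Fintype κ] [DecidableEq κ]
    (M : Matrix ι κ ℂ) : ℝ :=
  ‖LinearMap.toContinuousLinearMap (Matrix.toEuclideanLin M)‖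

/-! A 0-1 matrix supported on one superdiagonal is the matrix of a partial bijection `f`, so its
rank is the size of the domain of `f`, and multiplying by it moves rows or columns of the other
factor. If `rank A < rank B`, the entries of `AC - CB` include, up to sign, all entries `C i k` with
`i` a zero row of `A` and `k` a nonzero row of `B`: a block of `(n - rank A) × rank B`
entries of size at most `ε`. Since `(n - rank A) + rank B > n`, every term of the Leibniz expansion of
`det C` contains such an entry, so `‖det C‖ ≤ n! ε ξ^(n-1)`. The transposed argument for
`C⁻¹A - BC⁻¹ = C⁻¹(AC - CB)C⁻¹` gives `‖det C⁻¹‖ ≤ n! ξ²ε ξ^(n-1)`, and the product of the two bounds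
is `(n! ξⁿ ε)² < 1`, contradicting `det C · det C⁻¹ = 1`. -/

open Finset
open scoped Matrix.Norms.L2Operator Nat

theorem opNorm_eq_l2_opNorm {ι κ : Type*} [Fintype ι] [Fintype κ] [DecidableEq κ]
    (M : Matrix ι κ ℂ) : opNorm M = ‖M‖ :=
  rfl

theorem Matrix.norm_entry_le_l2_opNorm {𝕜 m n : Type*} [RCLike 𝕜] [Fintype m] [Fintype n]
    [DecidableEq n] (A : Matrix m n 𝕜) (i : m) (j : n) : ‖A i j‖ ≤ ‖A‖ := by
  have hcol := A.l2_opNorm_mulVec (EuclideanSpace.single j 1)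
  rw [PiLp.norm_single, norm_one, mul_one] at hcol
  refine le_trans (le_of_eq ?_) ((PiLp.norm_apply_le _ i).trans hcol)
  simp [mulVec_single]

theorem Matrix.l2_opNorm_inv_mul_sub_mul_inv_le {𝕜 n : Type*} [RCLike 𝕜] [Fintype n]
    [DecidableEq n] (A B : Matrix n n 𝕜) {C : Matrix n n 𝕜} (hC : IsUnit C.det) :
    ‖C⁻¹ * A - B * C⁻¹‖ ≤ ‖C⁻¹‖ * ‖A * C - C * B‖ * ‖C⁻¹‖ := by
  have hconj : C⁻¹ * (A * C - C * B) * C⁻¹ = C⁻¹ * A - B * C⁻¹ := by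
    rw [Matrix.mul_sub, Matrix.sub_mul, Matrix.mul_assoc, mul_nonsing_inv_cancel_right _ _ hC,
      nonsing_inv_mul_cancel_left _ _ hC]
  rw [← hconj]
  exact (l2_opNorm_mul _ _).trans (by gcongr; exact l2_opNorm_mul _ _)

theorem Matrix.norm_det_le_of_norm_le_on_rect {𝕜 ι : Type*} [NormedField 𝕜] [Fintype ι]
    [DecidableEq ι] {M : Matrix ι ι 𝕜} {ξ ε : ℝ} (hM : ∀ i j, ‖M i j‖ ≤ ξ) {R K : Finset ι}
    (hRK : Fintype.card ι < #R + #K) (hε : ∀ i ∈ R, ∀ j ∈ K, ‖M i j‖ ≤ ε) :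
    ‖M.det‖ ≤ (Fintype.card ι)! * ε * ξ ^ (Fintype.card ι - 1) := by
  have hterm (σ : Equiv.Perm ι) :
      ‖Equiv.Perm.sign σ • ∏ i, M (σ i) i‖ ≤ ε * ξ ^ (Fintype.card ι - 1) := by
    obtain ⟨j, hK, hR⟩ : ∃ j ∈ K, σ j ∈ R := by
      obtain ⟨i, hi⟩ := inter_nonempty_of_card_lt_card_add_card (subset_univ R)
        (subset_univ (K.map σ.toEmbedding)) (by simpa using hRK)
      simp only [mem_inter, mem_map_equiv] at hi
      exact ⟨σ.symm i, hi.2, by simpa using hi.1⟩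
    have hrest : ∏ i ∈ univ.erase j, ‖M (σ i) i‖ ≤ ξ ^ (Fintype.card ι - 1) := by
      refine (prod_le_prod (fun _ _ => norm_nonneg _) fun i _ => hM _ _).trans_eq ?_
      rw [prod_const, card_erase_of_mem (mem_univ _), card_univ]
    rw [norm_units_zsmul, norm_prod, ← mul_prod_erase _ _ (mem_univ j)]
    exact mul_le_mul (hε _ hR _ hK) hrest (prod_nonneg fun _ _ => norm_nonneg _)
      ((norm_nonneg _).trans (hε _ hR _ hK))
  calc ‖M.det‖ ≤ ∑ σ : Equiv.Perm ι, ‖Equiv.Perm.sign σ • ∏ i, M (σ i) i‖ := by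
        rw [det_apply]; exact norm_sum_le _ _
    _ ≤ ∑ σ : Equiv.Perm ι, ε * ξ ^ (Fintype.card ι - 1) := sum_le_sum fun σ _ => hterm σ
    _ = _ := by simp [Fintype.card_perm, mul_assoc]

section
variable {β : Type*} {p : β → Prop} [Decidable (∃ b, p b)]

theorem mem_dite_exists_choose_iff (hp : ∀ b b', p b → p b' → b = b') (b : β) :
    b ∈ (if h : ∃ b, p b then some h.choose else none) ↔ p b := by
  by_cases h : ∃ b, p b
  · rw [dif_pos h, Option.mem_some_iff]
    exact ⟨fun e => e ▸ h.choose_spec, hp _ _ h.choose_spec⟩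
  · simp only [dif_neg h, Option.mem_def, reduceCtorEq, false_iff]
    exact fun hb => h ⟨b, hb⟩
end

theorem Matrix.exists_pEquiv_toMatrix_eq {m n R : Type*} [DecidableEq n] [Zero R] [One R]
    (M : Matrix m n R) (h01 : ∀ i j, M i j = 0 ∨ M i j = 1)
    (hrow : ∀ i j j', M i j = 1 → M i j' = 1 → j = j')
    (hcol : ∀ i i' j, M i j = 1 → M i' j = 1 → i = i') :
    ∃ f : m ≃. n, f.toMatrix = M := by
  classical
  have mem_col := fun i => mem_dite_exists_choose_iff (hrow i)
  have mem_row := fun j => mem_dite_exists_choose_iff (fun i i' => hcol i i' j)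
  let f : m ≃. n := ⟨_, _, fun i j => (mem_row j i).trans (mem_col i j).symm⟩
  have mem_f : ∀ i j, j ∈ f i ↔ M i j = 1 := mem_col
  refine ⟨f, ?_⟩
  ext i j
  simp only [PEquiv.toMatrix_apply, mem_f]
  split_ifs with h
  exacts [h.symm, ((h01 i j).resolve_right h).symm]

theorem Matrix.exists_pEquiv_toMatrix_eq_of_superdiagonal {n r : ℕ} {R : Type*} [Zero R] [One R]
    [NeZero (1 : R)] (M : Matrix (Fin n) (Fin n) R) (h01 : ∀ i j, M i j = 0 ∨ M i j = 1)
    (hsupp : ∀ i j : Fin n, (j : ℕ) ≠ (i : ℕ) + r → M i j = 0) :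
    ∃ f : Fin n ≃. Fin n, f.toMatrix = M := by
  have hdiag : ∀ i j, M i j = 1 → (j : ℕ) = i + r := fun i j h => by
    by_contra hne
    exact zero_ne_one (hsupp i j hne ▸ h)
  refine M.exists_pEquiv_toMatrix_eq h01 (fun i j j' hj hj' => ?_) (fun i i' j hi hi' => ?_)
  · exact Fin.ext ((hdiag i j hj).trans (hdiag i j' hj').symm)
  · have := (hdiag i j hi).symm.trans (hdiag i' j hi')
    exact Fin.ext (by omega)

namespace PEquiv

variable {m n K : Type*} [Fintype m] [Fintype n] [DecidableEq m] [DecidableEq n] [Field K]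

theorem rank_toMatrix (f : m ≃. n) : (f.toMatrix : Matrix m n K).rank = #{i | (f i).isSome} := by
  classical
  have hdiag : ((f.trans f.symm).toMatrix : Matrix m m K) =
      diagonal fun i => if (f i).isSome then 1 else 0 := by
    ext i j
    rw [self_trans_symm]
    by_cases hij : i = j
    · subst hij
      rcases hi : f i with _ | b <;> simp [ofSet, hi]
    · simp [ofSet, hij]
  have hfactor : (f.trans f.symm).trans f = f := by
    ext i j
    rw [self_trans_symm, trans_eq_some]
    rcases hi : f i with _ | b <;> simp [ofSet_eq_some_iff, hi]
  have hrank : (f.toMatrix : Matrix m n K).rank = ((f.trans f.symm).toMatrix : Matrix m m K).rank :=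
    le_antisymm
      (by nth_rw 1 [← hfactor]; rw [toMatrix_trans]; exact rank_mul_le_left _ _)
      (by rw [toMatrix_trans]; exact rank_mul_le_left _ _)
  rw [hrank, hdiag, rank_diagonal, Fintype.card_subtype]
  simp [Option.isSome_iff_ne_none]

variable {ι 𝕜 : Type*} [Fintype ι] [DecidableEq ι] [NormedField 𝕜]

theorem norm_det_le_of_rank_lt_of_norm_toMatrix_mul_sub_le (f g : ι ≃. ι)
    (hfg : (f.toMatrix : Matrix ι ι 𝕜).rank < (g.toMatrix : Matrix ι ι 𝕜).rank)
    {X : Matrix ι ι 𝕜} {ξ ε : ℝ} (hX : ∀ i j, ‖X i j‖ ≤ ξ)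
    (hε : ∀ i j, ‖(f.toMatrix * X - X * g.toMatrix : Matrix ι ι 𝕜) i j‖ ≤ ε) :
    ‖X.det‖ ≤ (Fintype.card ι)! * ε * ξ ^ (Fintype.card ι - 1) := by
  rw [rank_toMatrix, rank_toMatrix] at hfg
  refine norm_det_le_of_norm_le_on_rect hX (R := {i | ¬(f i).isSome}) (K := {k | (g k).isSome})
    ?_ fun i hi k hk => ?_
  · have := card_filter_add_card_filter_not (s := univ) fun i => (f i).isSome
    rw [card_univ] at this
    omega
  · obtain ⟨j, hj⟩ := Option.isSome_iff_exists.1 (mem_filter.1 hk).2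
    have hentry : (f.toMatrix * X - X * g.toMatrix : Matrix ι ι 𝕜) i j = -X i k := by
      rw [Matrix.sub_apply, toMatrix_mul_apply, mul_toMatrix_apply, g.eq_some_iff.2 hj,
        Option.not_isSome_iff_eq_none.1 (mem_filter.1 hi).2]
      simp
    simpa [hentry] using hε i j

theorem norm_det_le_of_rank_lt_of_norm_mul_toMatrix_sub_le (f g : ι ≃. ι)
    (hfg : (f.toMatrix : Matrix ι ι 𝕜).rank < (g.toMatrix : Matrix ι ι 𝕜).rank)
    {X : Matrix ι ι 𝕜} {ξ ε : ℝ} (hX : ∀ i j, ‖X i j‖ ≤ ξ)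
    (hε : ∀ i j, ‖(X * f.toMatrix - g.toMatrix * X : Matrix ι ι 𝕜) i j‖ ≤ ε) :
    ‖X.det‖ ≤ (Fintype.card ι)! * ε * ξ ^ (Fintype.card ι - 1) := by
  rw [← det_transpose]
  refine norm_det_le_of_rank_lt_of_norm_toMatrix_mul_sub_le f.symm g.symm
    (by simpa only [toMatrix_symm, rank_transpose] using hfg) (fun i j => hX j i) fun i j => ?_
  simpa only [toMatrix_symm, ← transpose_mul, ← transpose_sub, transpose_apply] using hε j i

theorem one_le_mul_of_rank_ne (f g : ι ≃. ι)
    (hfg : (f.toMatrix : Matrix ι ι 𝕜).rank ≠ (g.toMatrix : Matrix ι ι 𝕜).rank)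
    {C : Matrix ι ι 𝕜} (hC : IsUnit C.det) {ξ ε₁ ε₂ : ℝ}
    (hCξ : ∀ i j, ‖C i j‖ ≤ ξ) (hCinvξ : ∀ i j, ‖C⁻¹ i j‖ ≤ ξ)
    (hε₁ : ∀ i j, ‖(f.toMatrix * C - C * g.toMatrix : Matrix ι ι 𝕜) i j‖ ≤ ε₁)
    (hε₂ : ∀ i j, ‖(C⁻¹ * f.toMatrix - g.toMatrix * C⁻¹ : Matrix ι ι 𝕜) i j‖ ≤ ε₂) :
    1 ≤ ((Fintype.card ι)! * ξ ^ (Fintype.card ι - 1)) ^ 2 * ε₁ * ε₂ := by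
  wlog hlt : (f.toMatrix : Matrix ι ι 𝕜).rank < (g.toMatrix : Matrix ι ι 𝕜).rank
    generalizing f g C ε₁ ε₂
  -- `(f, g, C) ↦ (g, f, C⁻¹)` exchanges the two defects up to sign.
  · have hswap (M N : Matrix ι ι 𝕜) (i j : ι) : ‖(M - N) i j‖ = ‖(N - M) i j‖ := by
      rw [← neg_sub, neg_apply, norm_neg]
    have := this g f hfg.symm (isUnit_nonsing_inv_det C hC) hCinvξ
      (by rwa [nonsing_inv_nonsing_inv C hC]) (fun i j => (hswap _ _ i j).trans_le (hε₂ i j))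
      (by rw [nonsing_inv_nonsing_inv C hC]; exact fun i j => (hswap _ _ i j).trans_le (hε₁ i j))
      (hfg.symm.lt_of_le (not_lt.1 hlt))
    linarith
  have hdetC := norm_det_le_of_rank_lt_of_norm_toMatrix_mul_sub_le f g hlt hCξ hε₁
  have hdetCinv := norm_det_le_of_rank_lt_of_norm_mul_toMatrix_sub_le f g hlt hCinvξ hε₂
  calc (1 : ℝ) = ‖C.det‖ * ‖C⁻¹.det‖ := by
        rw [← norm_mul, mul_comm, det_nonsing_inv_mul_det C hC, norm_one]
    _ ≤ ((Fintype.card ι)! * ε₁ * ξ ^ (Fintype.card ι - 1)) *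
          ((Fintype.card ι)! * ε₂ * ξ ^ (Fintype.card ι - 1)) :=
        mul_le_mul hdetC hdetCinv (norm_nonneg _) ((norm_nonneg _).trans hdetC)
    _ = _ := by ring

end PEquiv

theorem one_div_le_of_one_le_sq_mul {K ε : ℝ} (hK : 0 ≤ K) (hε : 0 ≤ ε) (h : 1 ≤ (K * ε) ^ 2) :
    1 / K ≤ ε := by
  have h1 : 1 ≤ K * ε := (one_le_pow_iff_of_nonneg (mul_nonneg hK hε) two_ne_zero).1 h
  have hKpos : 0 < K := lt_of_le_of_ne hK (by rintro rfl; linarith)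
  rw [div_le_iff₀ hKpos]
  linarith

theorem rank_eq_of_approx_intertwining
    (n r : ℕ)
    (A B : Matrix (Fin n) (Fin n) ℂ)
    (hA01 : ∀ i j, A i j = 0 ∨ A i j = 1)
    (hB01 : ∀ i j, B i j = 0 ∨ B i j = 1)
    (hAsupp : ∀ i j : Fin n, (j : ℕ) ≠ (i : ℕ) + r → A i j = 0)
    (hBsupp : ∀ i j : Fin n, (j : ℕ) ≠ (i : ℕ) + r → B i j = 0)
    (C : Matrix (Fin n) (Fin n) ℂ) (hC : IsUnit C)
    (ξ : ℝ) (hCn : opNorm C ≤ ξ) (hCin : opNorm C⁻¹ ≤ ξ)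
    (hsmall : opNorm (A * C - C * B) < 1 / (Nat.factorial n * ξ ^ n)) :
    A.rank = B.rank := by
  obtain ⟨f, rfl⟩ := exists_pEquiv_toMatrix_eq_of_superdiagonal A hA01 hAsupp
  obtain ⟨g, rfl⟩ := exists_pEquiv_toMatrix_eq_of_superdiagonal B hB01 hBsupp
  by_contra hne
  have hn : n ≠ 0 := by
    have := rank_le_width (f.toMatrix : Matrix (Fin n) (Fin n) ℂ)
    have := rank_le_width (g.toMatrix : Matrix (Fin n) (Fin n) ℂ)
    omega
  simp only [opNorm_eq_l2_opNorm] at hCn hCin hsmall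
  set ε := ‖(f.toMatrix * C - C * g.toMatrix : Matrix (Fin n) (Fin n) ℂ)‖
  have hCdet : IsUnit C.det := (isUnit_iff_isUnit_det C).1 hC
  have hξ : 0 ≤ ξ := (norm_nonneg C).trans hCn
  have hconj : ‖C⁻¹ * f.toMatrix - g.toMatrix * C⁻¹‖ ≤ ξ * ε * ξ :=
    (l2_opNorm_inv_mul_sub_mul_inv_le _ _ hCdet).trans (by gcongr)
  have key := PEquiv.one_le_mul_of_rank_ne f g hne hCdet
    (fun i j => (norm_entry_le_l2_opNorm C i j).trans hCn)
    (fun i j => (norm_entry_le_l2_opNorm C⁻¹ i j).trans hCin)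
    (fun i j => norm_entry_le_l2_opNorm _ i j)
    (fun i j => (norm_entry_le_l2_opNorm _ i j).trans hconj)
  have hsq : 1 ≤ (n ! * ξ ^ n * ε) ^ 2 := by
    refine key.trans_eq ?_
    rw [Fintype.card_fin, ← pow_sub_one_mul hn ξ]
    ring
  exact (one_div_le_of_one_le_sq_mul (by positivity) (norm_nonneg _) hsq).not_gt hsmall
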